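/- Let Φₛ be the general fully symmetric octupolar potential on ℝ³ with parameters α₀,α₁,α₂,α₃,β₁,β₂,β₃,γ₁,γ₂,γ₃ ∈ ℝ: Φₛ(x₁,x₂,x₃) = 6α₀x₁x₂x₃ + α₁x₁³ + α₂x₂³ + α₃x₃³ + 3(β₁x₁x₂² + β₂x₂x₃² + β₃x₃x₁²) + 3(γ₁x₁x₃² + γ₂x₂x₁² + γ₃x₃x₂²), and set Aᵢ = 3(αᵢ + βᵢ + γᵢ). Let G be the subgroup of the tetrahedral group fixing the North pole, consisting of the six 3×3 matrices M₁ = identity; M₂ = [[−1/2, √3/2, 0], [−√3/2, −1/2, 0], [0,0,1]]; M₃ = [[−1/2, −√3/2, 0], [√3/2, −1/2, 0], [0,0,1]]; M₄ = [[−1,0,0],[0,1,0],[0,0,1]]; M₅ = [[1/2, −√3/2, 0], [−√3/2, −1/2, 0], [0,0,1]]; M₆ = [[1/2, √3/2, 0], [√3/2, −1/2, 0], [0,0,1]]. Then Φₛ(Mx) = Φₛ(x) for all x ∈ ℝ³ and all M ∈ G if and only if α₀ = 0, α₁ = 0, β₁ = 0, β₂ = 0, A₁ = 0, A₂ = 0,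 and A₃ = 3(α₃ + 2β₃). In particular, G-invariance does not determine Φₛ uniquely up to scale: both α₃ and β₃ (hence the trace part A₃) remain free. -/
import Mathlib


/-- The general fully symmetric octupolar potential with its ten parameters,
as a function of a vector in `ℝ³`. -/
noncomputable def symPot (α₀ α₁ α₂ α₃ β₁ β₂ β₃ γ₁ γ₂ γ₃ : ℝ)
    (x : Fin 3 → ℝ) : ℝ :=
  6 * α₀ * x 0 * x 1 * x 2
    + α₁ * (x 0) ^ 3 + α₂ * (x 1) ^ 3 + α₃ * (x 2) ^ 3
    + 3 * (β₁ * x 0 * (x 1) ^ 2 + β₂ * x 1 * (x 2) ^ 2 + β₃ * x 2 * (x 0) ^ 2)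
    + 3 * (γ₁ * x 0 * (x 2) ^ 2 + γ₂ * x 1 * (x 0) ^ 2 + γ₃ * x 2 * (x 1) ^ 2)

/-- The six matrices of the maximal subgroup of the tetrahedral group fixing
the North pole. -/
noncomputable def tetraGroup : Set (Matrix (Fin 3) (Fin 3) ℝ) :=
  { !![1, 0, 0; 0, 1, 0; 0, 0, 1],
    !![-(1/2), Real.sqrt 3 / 2, 0; -(Real.sqrt 3 / 2), -(1/2), 0; 0, 0, 1],
    !![-(1/2), -(Real.sqrt 3 / 2), 0; Real.sqrt 3 / 2, -(1/2), 0; 0, 0, 1],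
    !![-1, 0, 0; 0, 1, 0; 0, 0, 1],
    !![1/2, -(Real.sqrt 3 / 2), 0; -(Real.sqrt 3 / 2), -(1/2), 0; 0, 0, 1],
    !![1/2, Real.sqrt 3 / 2, 0; Real.sqrt 3 / 2, -(1/2), 0; 0, 0, 1] }

theorem stmt19 (α₀ α₁ α₂ α₃ β₁ β₂ β₃ γ₁ γ₂ γ₃ : ℝ) :
    (∀ M ∈ tetraGroup, ∀ x : Fin 3 → ℝ,
        symPot α₀ α₁ α₂ α₃ β₁ β₂ β₃ γ₁ γ₂ γ₃ (M.mulVec x)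
          = symPot α₀ α₁ α₂ α₃ β₁ β₂ β₃ γ₁ γ₂ γ₃ x)
      ↔ (α₀ = 0 ∧ α₁ = 0 ∧ β₁ = 0 ∧ β₂ = 0 ∧
          3 * (α₁ + β₁ + γ₁) = 0 ∧ 3 * (α₂ + β₂ + γ₂) = 0 ∧
          3 * (α₃ + β₃ + γ₃) = 3 * (α₃ + 2 * β₃)) := by
  have hs : Real.sqrt 3 ^ 2 = 3 := Real.sq_sqrt (by norm_num)
  constructor
  · intro h
    have h4 := h (!![-1, 0, 0; 0, 1, 0; 0, 0, 1]) (by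
      simp [tetraGroup, Set.mem_insert_iff])
    have h2 := h (!![-(1/2), Real.sqrt 3 / 2, 0; -(Real.sqrt 3 / 2), -(1/2), 0; 0, 0, 1]) (by
      simp [tetraGroup, Set.mem_insert_iff])
    have e1 := h4 ![1, 0, 0]
    have e2 := h4 ![1, 1, 0]
    have e3 := h4 ![1, 0, 1]
    have e4 := h4 ![1, 1, 1]
    simp [symPot, Matrix.mulVec, dotProduct, Fin.sum_univ_three] at e1 e2 e3 e4
    have hα₁ : α₁ = 0 := by linarith
    have hβ₁ : β₁ = 0 := by linarith
    have hγ₁ : γ₁ = 0 := by linarith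
    have hα₀ : α₀ = 0 := by linarith
    subst hα₁ hβ₁ hγ₁ hα₀
    have e5 := h2 ![0, 1, 0]
    have e6 := h2 ![0, 1, 1]
    have e7 := h2 ![0, -1, 1]
    simp [symPot, Matrix.mulVec, dotProduct, Fin.sum_univ_three] at e5 e6 e7
    have hγ₂ : γ₂ = -α₂ := by linear_combination (-8/9 : ℝ) * e5 - γ₂/3 * hs
    subst hγ₂
    have hβ₂ : β₂ = 0 := by
      linear_combination (-1/9 : ℝ) * e6 + (1/9 : ℝ) * e7 + α₂/12 * hs
    have hγ₃ : γ₃ = β₃ := by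
      linear_combination (-2/9 : ℝ) * e6 - (2/9 : ℝ) * e7 + (β₃/3) * hs
    refine ⟨rfl, rfl, rfl, hβ₂, by ring, by linarith, by linarith⟩
  · rintro ⟨hα₀, hα₁, hβ₁, hβ₂, hA1, hA2, hA3⟩
    have hγ₁ : γ₁ = 0 := by linarith
    have hγ₂ : γ₂ = -α₂ := by linarith
    have hγ₃ : γ₃ = β₃ := by linarith
    subst hα₀ hα₁ hβ₁ hβ₂ hγ₁ hγ₂ hγ₃
    have key : ∀ (a b c d : ℝ) (x : Fin 3 → ℝ),
        (!![a, b, 0; c, d, 0; 0, 0, 1]).mulVec x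
          = ![a * x 0 + b * x 1, c * x 0 + d * x 1, x 2] := by
      intro a b c d x
      funext i
      fin_cases i <;>
        simp [Matrix.mulVec, dotProduct, Fin.sum_univ_three]
    intro M hM x
    simp only [tetraGroup, Set.mem_insert_iff, Set.mem_singleton_iff] at hM
    rcases hM with rfl | rfl | rfl | rfl | rfl | rfl <;>
      rw [key] <;>
      simp only [symPot, Matrix.cons_val_zero, Matrix.cons_val_one, Matrix.head_cons,
        Matrix.cons_val_two, Matrix.tail_cons]
    · ring
    · linear_combination ((3/4)*(x 1)^2*(x 2)*γ₃ + (3/8)*(x 1)^3*α₂ + (3/4)*(x 0)^2*(x 2)*γ₃ + (-9/8)*(x 0)^2*(x 1)*α₂ + (3/8)*Real.sqrt 3*(x 0)*(x 1)^2*α₂ + (-1/8)*Real.sqrt 3*(x 0)^3*α₂) * hs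
    · linear_combination ((3/4)*(x 1)^2*(x 2)*γ₃ + (3/8)*(x 1)^3*α₂ + (3/4)*(x 0)^2*(x 2)*γ₃ + (-9/8)*(x 0)^2*(x 1)*α₂ + (-3/8)*Real.sqrt 3*(x 0)*(x 1)^2*α₂ + (1/8)*Real.sqrt 3*(x 0)^3*α₂) * hs
    · ring
    · linear_combination ((3/4)*(x 1)^2*(x 2)*γ₃ + (3/8)*(x 1)^3*α₂ + (3/4)*(x 0)^2*(x 2)*γ₃ + (-9/8)*(x 0)^2*(x 1)*α₂ + (3/8)*Real.sqrt 3*(x 0)*(x 1)^2*α₂ + (-1/8)*Real.sqrt 3*(x 0)^3*α₂) * hs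
    · linear_combination ((3/4)*(x 1)^2*(x 2)*γ₃ + (3/8)*(x 1)^3*α₂ + (3/4)*(x 0)^2*(x 2)*γ₃ + (-9/8)*(x 0)^2*(x 1)*α₂ + (-3/8)*Real.sqrt 3*(x 0)*(x 1)^2*α₂ + (1/8)*Real.sqrt 3*(x 0)^3*α₂) * hs
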